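/- arXiv:1601.00203 — 2 statements merged into one kernel-verified Lean document; each statement's English description precedes it below -/
import Mathlib

section
/- Let w be a positive integer and λ_x, λ_y, λ_ξ real numbers with λ_x + λ_y + λ_ξ = 0, λ_ξ ≠ 0, and such that w·λ_y/λ_ξ is not an integer. Then (1/w) · (∏_{k=1-w}^{-1} ((k/w)λ_ξ - λ_x)) / (∏_{k=0}^{w-1} λ_ξ(k/w - 1)) = π / (w·z·Γ(1 + λ_x/z)·Γ(1 + λ_y/z)·Γ(1 + λ_ξ/z)·sin(π λ_y/z)), where z = λ_ξ/w. -/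
/-!
After the substitution `z = λ_ξ / w`, `a = λ_x / z`, `b = λ_y / z` one has `a + b = -w`; the
numerator becomes `(-z)^(w-1) (a+1)⋯(a+w-1)` and the denominator `(-z)^w w!`. The rising product
is `Γ(a+w) / Γ(1+a) = Γ(-b) / Γ(1+a)`, and the reflection formula turns `Γ(-b)` into
`-π / (Γ(1+b) sin(π b))`, while `Γ(1 + λ_ξ/z) = Γ(1+w) = w!`.
-/

open Finset

theorem Finset.prod_range_cast_sub_sub {R : Type*} [CommRing R] (n : ℕ) (x : R) :
    ∏ j ∈ range n, ((j : R) - n - x) = (-1) ^ n * ∏ i ∈ range n, (1 + x + i) := by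
  rw [show (-1 : R) ^ n = ∏ _ ∈ range n, (-1 : R) by simp, ← prod_mul_distrib,
    ← prod_range_reflect]
  refine prod_congr rfl fun j hj => ?_
  rw [Nat.cast_sub (by simp at hj; omega), Nat.cast_sub (by simp at hj; omega)]
  push_cast
  ring

theorem Finset.prod_range_cast_sub {R : Type*} [CommRing R] (n : ℕ) :
    ∏ k ∈ range n, ((k : R) - n) = (-1) ^ n * (n.factorial : R) := by
  rw [← prod_range_add_one_eq_factorial]
  push_cast
  simpa [add_comm (1 : R)] using prod_range_cast_sub_sub n (0 : R)

theorem Finset.prod_range_cast_add_one_sub_div_mul_sub {K : Type*} [Field K] [CharZero K]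
    (w : ℕ) (a z : K) :
    ∏ j ∈ range (w - 1), (((j : K) + 1 - w) / w * (w * z) - a * z)
      = (-z) ^ (w - 1) * ∏ i ∈ range (w - 1), (1 + a + i) := by
  obtain _ | n := w
  · simp
  rw [Nat.add_sub_cancel]
  calc ∏ j ∈ range n, (((j : K) + 1 - (n + 1 : ℕ)) / (n + 1 : ℕ) * ((n + 1 : ℕ) * z) - a * z)
      = ∏ j ∈ range n, z * ((j : K) - n - a) := prod_congr rfl fun j _ => by
        field_simp
        push_cast
        ring
    _ = (-z) ^ n * ∏ i ∈ range n, (1 + a + i) := by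
      rw [prod_mul_distrib, prod_const, card_range, prod_range_cast_sub_sub, neg_pow]
      ring

theorem Finset.prod_range_mul_cast_div_sub_one {K : Type*} [Field K] [CharZero K]
    (w : ℕ) (z : K) :
    ∏ k ∈ range w, (w * z * ((k : K) / w - 1)) = (-z) ^ w * w.factorial := by
  rcases eq_or_ne w 0 with rfl | hw
  · simp
  calc ∏ k ∈ range w, (w * z * ((k : K) / w - 1))
      = ∏ k ∈ range w, z * ((k : K) - w) := prod_congr rfl fun k _ => by
        field_simp
    _ = (-z) ^ w * w.factorial := by
      rw [prod_mul_distrib, prod_const, card_range, prod_range_cast_sub, neg_pow]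
      ring

namespace Real

theorem Gamma_add_nat_eq_mul_prod (x : ℝ) (n : ℕ) (hx : ∀ i < n, x + i ≠ 0) :
    Gamma (x + n) = Gamma x * ∏ i ∈ range n, (x + i) := by
  induction n with
  | zero => simp
  | succ n ih =>
    rw [prod_range_succ, Nat.cast_succ, ← add_assoc, Gamma_add_one (hx n n.lt_succ_self),
      ih fun i hi => hx i (hi.trans n.lt_succ_self)]
    ring

theorem Gamma_neg_mul_Gamma_one_add_mul_sin {b : ℝ} (hb : sin (π * b) ≠ 0) :
    Gamma (-b) * Gamma (1 + b) * sin (π * b) = -π := by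
  have := Gamma_mul_Gamma_one_sub (-b)
  rw [sub_neg_eq_add, mul_neg, sin_neg] at this
  rw [this]
  field_simp

theorem sin_pi_mul_ne_zero {b : ℝ} (hb : ∀ k : ℤ, b ≠ k) : sin (π * b) ≠ 0 := by
  rw [Ne, sin_eq_zero_iff]
  rintro ⟨k, hk⟩
  exact hb k (mul_left_cancel₀ pi_ne_zero (by linarith))

theorem Gamma_mul_Gamma_mul_sin_mul_prod_range {a b : ℝ} {n : ℕ} (hab : a + b + (n + 1) = 0)
    (hb : ∀ k : ℤ, b ≠ k) :
    Gamma (1 + a) * Gamma (1 + b) * sin (π * b) * ∏ i ∈ range n, (1 + a + i) = -π := by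
  have hshift : ∀ i : ℕ, 1 + a + i ≠ 0 := fun i h => hb (i - n) (by push_cast; linarith)
  have hGamma : Gamma (-b) = Gamma (1 + a) * ∏ i ∈ range n, (1 + a + i) := by
    rw [← Gamma_add_nat_eq_mul_prod _ _ fun i _ => hshift i]
    congr 1
    linarith
  rw [← Gamma_neg_mul_Gamma_one_add_mul_sin (sin_pi_mul_ne_zero hb), hGamma]
  ring

end Real

/-- The main disk-term identity (Theorem 3.1): with `z = λ_ξ/w`, the localization
disk factor equals `π / (w z Γ̂_X sin(π λ_y/z))` where
`Γ̂_X = Γ(1+λ_x/z) Γ(1+λ_y/z) Γ(1+λ_ξ/z)`. -/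
theorem gamma_class_disk_term (w : ℕ) (hw : 0 < w) (lamX lamY lamXi : ℝ)
    (hsum : lamX + lamY + lamXi = 0) (hXi : lamXi ≠ 0)
    (hint : ∀ n : ℤ, w * lamY / lamXi ≠ (n : ℝ)) (z : ℝ) (hz : z = lamXi / w) :
    (1 / (w : ℝ)) *
        (∏ j ∈ range (w - 1), (((j : ℝ) + 1 - w) / w * lamXi - lamX)) /
        (∏ k ∈ range w, lamXi * ((k : ℝ) / w - 1))
      = Real.pi /
        (w * z * (Real.Gamma (1 + lamX / z) * Real.Gamma (1 + lamY / z) *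
          Real.Gamma (1 + lamXi / z)) * Real.sin (Real.pi * lamY / z)) := by
  obtain ⟨n, rfl⟩ : ∃ n, w = n + 1 := ⟨w - 1, by omega⟩
  have hz0 : z ≠ 0 := by rw [hz]; positivity
  obtain rfl : lamXi = (n + 1 : ℕ) * z := by rw [hz]; field_simp
  obtain ⟨a, rfl⟩ : ∃ a, lamX = a * z := ⟨lamX / z, by field_simp⟩
  obtain ⟨b, rfl⟩ : ∃ b, lamY = b * z := ⟨lamY / z, by field_simp⟩
  have hab : a + b + (n + 1) = 0 := by
    apply mul_right_cancel₀ hz0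
    push_cast at hsum
    linear_combination hsum
  have hb : ∀ k : ℤ, b ≠ k := fun k => by
    convert hint k using 1
    field_simp
  have hGammaXi : Real.Gamma (1 + (n + 1 : ℕ) * z / z) = (n + 1).factorial := by
    rw [mul_div_cancel_right₀ _ hz0, add_comm, Real.Gamma_nat_eq_factorial]
  have hcore := Real.Gamma_mul_Gamma_mul_sin_mul_prod_range hab hb
  have hne : _ ≠ (0 : ℝ) := hcore ▸ neg_ne_zero.mpr Real.pi_ne_zero
  simp only [mul_ne_zero_iff] at hne
  obtain ⟨⟨⟨hGa, hGb⟩, hsin⟩, -⟩ := hne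
  rw [prod_range_cast_add_one_sub_div_mul_sub, prod_range_mul_cast_div_sub_one, hGammaXi,
    mul_div_cancel_right₀ _ hz0, mul_div_cancel_right₀ _ hz0, mul_div_assoc Real.pi,
    mul_div_cancel_right₀ _ hz0, Nat.add_sub_cancel, pow_succ]
  have hz' : -z ≠ 0 := neg_ne_zero.mpr hz0
  field_simp
  linear_combination -hcore
end

section
/- Let σ: ℂ² × ℂ* → ℂ² × ℂ* be given by σ(x, y, ξ) = (X₀·conj(yξ), Y₀·conj(xξ), 1/conj(ξ)) for nonzero constants X₀, Y₀ ∈ ℂ. Then σ is an involution (σ ∘ σ = id) if and only if X₀·conj(Y₀) = 1. -/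
open ComplexConjugate

/-- The map `σ(x,y,ξ) = (X₀·conj(yξ), Y₀·conj(xξ), 1/conj(ξ))` on `ℂ² × ℂ*`. -/
noncomputable def involutionMap (X₀ Y₀ : ℂ) (p : ℂ × ℂ × ℂ) : ℂ × ℂ × ℂ :=
  (X₀ * conj (p.2.1 * p.2.2), Y₀ * conj (p.1 * p.2.2), (conj p.2.2)⁻¹)

theorem involutionMap_involutionMap (X₀ Y₀ x y : ℂ) {ξ : ℂ} (hξ : ξ ≠ 0) :
    involutionMap X₀ Y₀ (involutionMap X₀ Y₀ (x, y, ξ)) =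
      (X₀ * conj Y₀ * x, conj (X₀ * conj Y₀) * y, ξ) := by
  simp only [involutionMap, map_mul, map_inv₀, Complex.conj_conj, inv_inv]
  refine Prod.ext ?_ (Prod.ext ?_ rfl) <;> field_simp

theorem involution_iff_general (X₀ Y₀ : ℂ) :
    (∀ p : ℂ × ℂ × ℂ, p.2.2 ≠ 0 → involutionMap X₀ Y₀ (involutionMap X₀ Y₀ p) = p) ↔
      X₀ * conj Y₀ = 1 := by
  constructor
  · intro h
    have h₁ := congrArg Prod.fst (h (1, 1, 1) one_ne_zero)
    rwa [involutionMap_involutionMap _ _ _ _ one_ne_zero, mul_one] at h₁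
  · rintro h ⟨x, y, ξ⟩ (hξ : ξ ≠ 0)
    rw [involutionMap_involutionMap _ _ _ _ hξ, h, map_one, one_mul, one_mul]

/-- `σ` is an involution on `ℂ² × ℂ*` if and only if `X₀·conj(Y₀) = 1`. -/
theorem involution_iff (X₀ Y₀ : ℂ) (hX : X₀ ≠ 0) (hY : Y₀ ≠ 0) :
    (∀ p : ℂ × ℂ × ℂ, p.2.2 ≠ 0 → involutionMap X₀ Y₀ (involutionMap X₀ Y₀ p) = p) ↔
      X₀ * conj Y₀ = 1 :=
  involution_iff_general X₀ Y₀
end
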